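/- arXiv:2505.09964 — 6 statements merged into one kernel-verified Lean document; each statement's English description precedes it below -/
import Mathlib

section
/- Let n ≥ 1 be a natural number. Then for all x > 0, v(f_n)(x) = (n/x²)·f_n(x)² + 2n(n+1)·x^{2n} · ∫_0^x f_n(t)²/t^{2n+3} dt, and consequently v(f_n)(x) > 0 for all x > 0. -/
/-!
Write `N = n ≥ 1` and `f = f_N`, so that `f' = x f_{N-1}` and `f'' = (2N/x) f' - f` for
`x > 0`. Eliminating `f''` through this equation, `w := (v(f) - N f²/x²) / x^{2N}` satisfies
`w' = 2N(N+1) f²/x^{2N+3}`, and the bounds `|f_k(x)| ≤ x^{2k+1}` give `w(x) = O(x^{2N}) → 0`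
as `x → 0⁺`, so the identity is the fundamental theorem of calculus for `w` on `[0, x]`. The
integrand is positive near `0` because every `f_k` is positive on `(0, π)`, whence
`v(f)(x) > 0`.
-/

/-- v h = (deriv h)^2 - (second derivative of h) * h. -/
noncomputable def v (f : ℝ → ℝ) (x : ℝ) : ℝ := (deriv f x) ^ 2 - deriv^[2] f x * f x

/-- `fn n x = √(π/2)·x^(n+1/2)·J_(n+1/2)(x)`, via the equivalent recursive definition
`fn 0 = sin`, `fn (n+1) x = ∫_0^x t·fn n t dt`. -/
noncomputable def fn : ℕ → ℝ → ℝ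
  | 0 => fun x => Real.sin x
  | n + 1 => fun x => ∫ t in (0:ℝ)..x, t * fn n t

open Real Set Filter Topology MeasureTheory intervalIntegral

lemma eq_of_hasDerivAt_eq {f g f' : ℝ → ℝ} (hf : ∀ x, HasDerivAt f (f' x) x)
    (hg : ∀ x, HasDerivAt g (f' x) x) (h0 : f 0 = g 0) : f = g :=
  eq_of_fderiv_eq (fun x => (hf x).differentiableAt) (fun x => (hg x).differentiableAt)
    (fun x => (hf x).hasFDerivAt.fderiv.trans (hg x).hasFDerivAt.fderiv.symm) 0 h0

lemma integral_pos_of_pos_near {f : ℝ → ℝ} {a b c : ℝ} (hab : a < b) (hac : a < c)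
    (hf : IntervalIntegrable f volume a b) (hnonneg : ∀ t ∈ Ioc a b, 0 ≤ f t)
    (hpos : ∀ t ∈ Ioo a c, 0 < f t) : 0 < ∫ t in a..b, f t := by
  have has : a < min b c := lt_min hab hac
  calc 0 < ∫ t in a..min b c, f t :=
        intervalIntegral_pos_of_pos_on (hf.mono_set (uIcc_subset_uIcc_left ?_))
          (fun t ht => hpos t ⟨ht.1, ht.2.trans_le (min_le_right b c)⟩) has
    _ ≤ ∫ t in a..b, f t := integral_mono_interval le_rfl has.le (min_le_left b c)
          (ae_restrict_of_forall_mem measurableSet_Ioc hnonneg) hf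
  rw [uIcc_of_le hab.le]
  exact ⟨has.le, min_le_left b c⟩

-- Stated without `x ^ (2 * N - 1)`, whose truncated exponent at `N = 0` defeats `field_simp`.
lemma hasDerivAt_pow_two_mul (N : ℕ) (x : ℝ) :
    HasDerivAt (fun y => y ^ (2 * N)) (2 * N * x ^ (2 * N) / x) x := by
  refine (hasDerivAt_pow (2 * N) x).congr_deriv ?_
  rcases N with _ | N
  · simp
  · rcases eq_or_ne x 0 with rfl | hx
    · simp [show 2 * (N + 1) - 1 ≠ 0 by omega]
    · rw [show 2 * (N + 1) = 2 * N + 1 + 1 by ring, pow_succ, Nat.add_sub_cancel]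
      field_simp
      push_cast
      ring

-- `(v(u) - N u²/x²) / x^{2N}`, with `u''` replaced by `(2N/x) u' - u` from the Bessel equation.
noncomputable def vRemainder (N : ℕ) (u u' : ℝ → ℝ) (x : ℝ) : ℝ :=
  (u' x ^ 2 - (2 * N / x * u' x - u x) * u x - N / x ^ 2 * u x ^ 2) / x ^ (2 * N)

lemma hasDerivAt_vRemainder (N : ℕ) {u u' : ℝ → ℝ} {x : ℝ} (hx : x ≠ 0)
    (hu : HasDerivAt u (u' x) x) (hu' : HasDerivAt u' (2 * N / x * u' x - u x) x) :
    HasDerivAt (vRemainder N u u') (2 * N * (N + 1) * (u x ^ 2 / x ^ (2 * N + 3))) x := by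
  have hinv : HasDerivAt (fun y : ℝ => 2 * N / y) (-(2 * N) / x ^ 2) x := by
    simpa [div_eq_mul_inv] using (hasDerivAt_inv hx).const_mul (2 * (N : ℝ))
  have hinv2 : HasDerivAt (fun y : ℝ => N / y ^ 2) (-(2 * N) / x ^ 3) x := by
    have := ((hasDerivAt_pow 2 x).inv (pow_ne_zero 2 hx)).const_mul (N : ℝ)
    simp only [div_eq_mul_inv]
    refine this.congr_deriv ?_
    field_simp
    ring
  have := ((((hu'.pow 2).sub (((hinv.mul hu').sub hu).mul hu)).sub
    (hinv2.mul (hu.pow 2))).div (hasDerivAt_pow_two_mul N x) (pow_ne_zero _ hx))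
  refine this.congr_deriv ?_
  simp only [Pi.mul_apply, Pi.sub_apply, Pi.pow_apply]
  field_simp
  ring

lemma abs_vRemainder_le (N : ℕ) {u u' : ℝ → ℝ} {t : ℝ} (ht : 0 < t) (ht1 : t ≤ 1)
    (hu : |u t| ≤ t ^ (2 * N + 1)) (hu' : |u' t| ≤ t ^ (2 * N)) :
    |vRemainder N u u' t| ≤ (3 * N + 2) * t ^ (2 * N) := by
  set a := u' t / t ^ (2 * N)
  set b := u t / t ^ (2 * N + 1)
  have ha : |a| ≤ 1 := by
    rw [abs_div, abs_of_pos (pow_pos ht _)]; exact div_le_one_of_le₀ hu' (by positivity)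
  have hb : |b| ≤ 1 := by
    rw [abs_div, abs_of_pos (pow_pos ht _)]; exact div_le_one_of_le₀ hu (by positivity)
  have hvR : vRemainder N u u' t =
      t ^ (2 * N) * (a ^ 2 - 2 * N * (a * b) + b ^ 2 * t ^ 2 - N * b ^ 2) := by
    simp only [vRemainder, a, b]
    field_simp
    ring
  have ha2 : a ^ 2 ≤ 1 := (sq_le_one_iff_abs_le_one a).2 ha
  have hb2 : b ^ 2 ≤ 1 := (sq_le_one_iff_abs_le_one b).2 hb
  have hab : |a * b| ≤ 1 := by rw [abs_mul]; exact mul_le_one₀ ha (abs_nonneg b) hb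
  have hbt : b ^ 2 * t ^ 2 ≤ 1 := mul_le_one₀ hb2 (sq_nonneg t) (pow_le_one₀ ht.le ht1)
  have hN : (0 : ℝ) ≤ N := N.cast_nonneg
  rw [hvR, abs_mul, abs_of_pos (by positivity), mul_comm]
  gcongr
  rw [abs_le] at hab ⊢
  constructor <;> nlinarith [sq_nonneg a, sq_nonneg b, mul_nonneg (sq_nonneg b) (sq_nonneg t)]

structure IsBesselPair (N : ℕ) (u u' : ℝ → ℝ) : Prop where
  hasDerivAt : ∀ t, 0 < t → HasDerivAt u (u' t) t
  hasDerivAt_deriv : ∀ t, 0 < t → HasDerivAt u' (2 * N / t * u' t - u t) t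
  abs_le : ∀ t ∈ Ioc (0 : ℝ) 1, |u t| ≤ t ^ (2 * N + 1)
  abs_deriv_le : ∀ t ∈ Ioc (0 : ℝ) 1, |u' t| ≤ t ^ (2 * N)

namespace IsBesselPair

variable {N : ℕ} {u u' : ℝ → ℝ}

lemma tendsto_vRemainder (h : IsBesselPair N u u') (hN : N ≠ 0) :
    Tendsto (vRemainder N u u') (𝓝[>] 0) (𝓝 0) := by
  have hbound : Tendsto (fun t : ℝ => (3 * N + 2) * t ^ (2 * N)) (𝓝[>] 0) (𝓝 0) := by
    have hcont : Continuous fun t : ℝ => (3 * N + 2) * t ^ (2 * N) := by fun_prop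
    simpa [hN] using (hcont.tendsto 0).mono_left nhdsWithin_le_nhds
  refine squeeze_zero_norm' ?_ hbound
  filter_upwards [Ioc_mem_nhdsGT one_pos] with t ht
  exact abs_vRemainder_le N ht.1 ht.2 (h.abs_le t ht) (h.abs_deriv_le t ht)

lemma hasDerivAt_vRemainder (h : IsBesselPair N u u') {x : ℝ} (hx : 0 < x) :
    HasDerivAt (vRemainder N u u') (2 * N * (N + 1) * (u x ^ 2 / x ^ (2 * N + 3))) x :=
  _root_.hasDerivAt_vRemainder N hx.ne' (h.hasDerivAt x hx) (h.hasDerivAt_deriv x hx)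

lemma continuousOn_vRemainder (h : IsBesselPair N u u') (hN : N ≠ 0) :
    ContinuousOn (vRemainder N u u') (Ici 0) := by
  intro x hx
  rcases (mem_Ici.1 hx).eq_or_lt with rfl | hx
  · rw [← continuousWithinAt_Ioi_iff_Ici, ContinuousWithinAt]
    simpa [vRemainder, hN] using h.tendsto_vRemainder hN
  · exact (h.hasDerivAt_vRemainder hx).continuousAt.continuousWithinAt

lemma intervalIntegrable (h : IsBesselPair N u u') (hN : N ≠ 0) {x : ℝ} (hx : 0 ≤ x) :
    IntervalIntegrable (fun t => 2 * N * (N + 1) * (u t ^ 2 / t ^ (2 * N + 3))) volume 0 x := by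
  refine intervalIntegrable_deriv_of_nonneg ((h.continuousOn_vRemainder hN).mono ?_)
    (fun t ht => h.hasDerivAt_vRemainder ?_) (fun t ht => ?_)
  · rw [uIcc_of_le hx]; exact Icc_subset_Ici_self
  · rw [min_eq_left hx] at ht; exact ht.1
  · rw [min_eq_left hx] at ht; have := ht.1; positivity

lemma integral_eq_vRemainder (h : IsBesselPair N u u') (hN : N ≠ 0) {x : ℝ} (hx : 0 ≤ x) :
    ∫ t in (0 : ℝ)..x, 2 * N * (N + 1) * (u t ^ 2 / t ^ (2 * N + 3)) = vRemainder N u u' x := by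
  rw [integral_eq_sub_of_hasDerivAt_of_le hx
    ((h.continuousOn_vRemainder hN).mono Icc_subset_Ici_self)
    (fun t ht => h.hasDerivAt_vRemainder ht.1) (h.intervalIntegrable hN hx)]
  simp [vRemainder, hN]

end IsBesselPair

lemma fn_zero : fn 0 = sin := rfl

lemma fn_succ_zero (n : ℕ) : fn (n + 1) 0 = 0 := by simp [fn]

lemma continuous_fn : ∀ n, Continuous (fn n)
  | 0 => continuous_sin
  | n + 1 => continuous_iff_continuousAt.2 fun x =>
      ((continuous_id.mul (continuous_fn n)).integral_hasStrictDerivAt 0 x).hasDerivAt.continuousAt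

lemma hasDerivAt_fn_succ (n : ℕ) (x : ℝ) : HasDerivAt (fn (n + 1)) (x * fn n x) x :=
  ((continuous_id.mul (continuous_fn n)).integral_hasStrictDerivAt 0 x).hasDerivAt

lemma deriv_fn_succ (n : ℕ) : deriv (fn (n + 1)) = fun x => x * fn n x :=
  funext fun x => (hasDerivAt_fn_succ n x).deriv

lemma fn_one (x : ℝ) : fn 1 x = sin x - x * cos x := by
  refine congrFun (eq_of_hasDerivAt_eq (g := fun y => sin y - y * cos y) (hasDerivAt_fn_succ 0)
    (fun y => ?_) (by simp [fn_succ_zero])) x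
  refine ((hasDerivAt_sin y).sub ((hasDerivAt_id y).mul (hasDerivAt_cos y))).congr_deriv ?_
  simp only [fn_zero, id]
  ring

-- As `f_{m+1}' = x f_m`, this is the Bessel equation `f_{m+1}'' = (2(m+1)/x) f_{m+1}' - f_{m+1}`.
lemma hasDerivAt_mul_fn (m : ℕ) (x : ℝ) :
    HasDerivAt (fun y => y * fn m y) ((2 * m + 2) * fn m x - fn (m + 1) x) x := by
  induction m generalizing x with
  | zero =>
    refine ((hasDerivAt_id x).mul (hasDerivAt_sin x)).congr_deriv ?_
    simp only [Nat.zero_add, fn_one, fn_zero, id]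
    push_cast
    ring
  | succ m ih =>
    have hrec (y : ℝ) : fn (m + 2) y = (2 * m + 3) * fn (m + 1) y - y * (y * fn m y) := by
      refine congrFun (eq_of_hasDerivAt_eq
        (g := fun y => (2 * m + 3) * fn (m + 1) y - y * (y * fn m y))
        (hasDerivAt_fn_succ (m + 1)) (fun z => ?_) (by simp [fn_succ_zero])) y
      refine (((hasDerivAt_fn_succ m z).const_mul (2 * m + 3 : ℝ)).sub
        ((hasDerivAt_id z).mul (ih z))).congr_deriv ?_
      simp only [id]
      ring
    refine ((hasDerivAt_id x).mul (hasDerivAt_fn_succ m x)).congr_deriv ?_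
    rw [hrec x]
    simp only [id]
    push_cast
    ring

lemma abs_fn_le (n : ℕ) {t : ℝ} (ht : 0 ≤ t) : |fn n t| ≤ t ^ (2 * n + 1) := by
  induction n generalizing t with
  | zero => simpa [fn, abs_of_nonneg ht] using abs_sin_le_abs (x := t)
  | succ n ih =>
    have hbound : ∀ s ∈ uIoc 0 t, ‖s * fn n s‖ ≤ t ^ (2 * n + 2) := by
      intro s hs
      rw [uIoc_of_le ht] at hs
      calc ‖s * fn n s‖ = s * |fn n s| := by rw [norm_mul, norm_of_nonneg hs.1.le, norm_eq_abs]
        _ ≤ s * s ^ (2 * n + 1) := mul_le_mul_of_nonneg_left (ih hs.1.le) hs.1.le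
        _ = s ^ (2 * n + 2) := by ring
        _ ≤ t ^ (2 * n + 2) := by gcongr; exacts [hs.1.le, hs.2]
    calc |fn (n + 1) t| ≤ t ^ (2 * n + 2) * |t - 0| := norm_integral_le_of_norm_le_const hbound
      _ = t ^ (2 * (n + 1) + 1) := by rw [sub_zero, abs_of_nonneg ht]; ring

lemma fn_pos (n : ℕ) {t : ℝ} (ht : t ∈ Ioo 0 π) : 0 < fn n t := by
  induction n generalizing t with
  | zero => exact sin_pos_of_pos_of_lt_pi ht.1 ht.2
  | succ n ih =>
    exact intervalIntegral_pos_of_pos_on ((continuous_id.mul (continuous_fn n)).intervalIntegrable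
      0 t) (fun s hs => mul_pos hs.1 (ih ⟨hs.1, hs.2.trans ht.2⟩)) ht.1

lemma isBesselPair_fn (m : ℕ) : IsBesselPair (m + 1) (fn (m + 1)) (fun y => y * fn m y) where
  hasDerivAt t _ := hasDerivAt_fn_succ m t
  hasDerivAt_deriv t ht := (hasDerivAt_mul_fn m t).congr_deriv (by field_simp; push_cast; ring)
  abs_le t ht := abs_fn_le (m + 1) ht.1.le
  abs_deriv_le t ht := by
    rw [abs_mul, abs_of_pos ht.1, mul_add_one, pow_succ']
    exact mul_le_mul_of_nonneg_left (abs_fn_le m ht.1.le) ht.1.le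

lemma v_fn_succ (m : ℕ) {x : ℝ} (hx : x ≠ 0) :
    v (fn (m + 1)) x = ((m + 1 : ℕ) : ℝ) / x ^ 2 * fn (m + 1) x ^ 2 +
      x ^ (2 * (m + 1)) * vRemainder (m + 1) (fn (m + 1)) (fun y => y * fn m y) x := by
  have h2 : deriv^[2] (fn (m + 1)) x = (2 * m + 2) * fn m x - fn (m + 1) x := by
    rw [Function.iterate_succ_apply', Function.iterate_one, deriv_fn_succ]
    exact (hasDerivAt_mul_fn m x).deriv
  rw [v, h2, deriv_fn_succ, vRemainder]
  field_simp
  push_cast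
  ring

theorem stmt_3 (n : ℕ) (hn : 1 ≤ n) :
    ∀ x > (0 : ℝ),
      (v (fn n) x = (n : ℝ) / x ^ 2 * (fn n x) ^ 2 +
        2 * (n : ℝ) * ((n : ℝ) + 1) * x ^ (2 * n) *
          ∫ t in (0:ℝ)..x, (fn n t) ^ 2 / t ^ (2 * n + 3)) ∧
      0 < v (fn n) x := by
  obtain ⟨m, rfl⟩ : ∃ m, n = m + 1 := ⟨n - 1, by omega⟩
  intro x hx
  have hpair := isBesselPair_fn m
  have hvR := hpair.integral_eq_vRemainder m.succ_ne_zero hx.le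
  have hpos : 0 < vRemainder (m + 1) (fn (m + 1)) (fun y => y * fn m y) x := by
    rw [← hvR]
    refine integral_pos_of_pos_near hx pi_pos (hpair.intervalIntegrable m.succ_ne_zero hx.le)
      (fun t ht => by have := ht.1; positivity)
      (fun t ht => mul_pos (by positivity)
        (div_pos (pow_pos (fn_pos (m + 1) ht) 2) (pow_pos ht.1 _)))
  rw [intervalIntegral.integral_const_mul] at hvR
  rw [v_fn_succ m hx.ne']
  exact ⟨by rw [← hvR]; ring,
    add_pos_of_nonneg_of_pos (by positivity) (mul_pos (pow_pos hx _) hpos)⟩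
end

section
/- Let p, q be twice continuously differentiable real functions on an open interval (a,b) and let f be a solution of f'' + p·f' + q·f = 0 on (a,b) (so f is four times differentiable). Then for every x in (a,b) with p'(x) ≠ 0, v(f)''(x) + (p(x) − p''(x)/p'(x))·v(f)'(x) + (2p'(x) − p''(x)p(x)/p'(x))·v(f)(x) = 2p'(x)·f'(x)² + f(x)²·p'(x)·(q'/p')'(x) + 2q'(x)·f'(x)·f(x). -/
open Set Filter Topology

section IteratedDerivatives

variable {U : Set ℝ} {g : ℝ → ℝ} {y : ℝ}

theorem ContDiffOn.hasDerivAt_iterate_deriv {n k : ℕ} (hg : ContDiffOn ℝ n g U)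
    (hU : IsOpen U) (hk : k < n) (hy : y ∈ U) :
    HasDerivAt (deriv^[k] g) (deriv^[k + 1] g y) y := by
  rw [Function.iterate_succ_apply']
  refine DifferentiableAt.hasDerivAt ?_
  induction k generalizing g n with
  | zero =>
    exact (hg.differentiableOn (by exact_mod_cast (by omega : n ≠ 0))).differentiableAt
      (hU.mem_nhds hy)
  | succ k ih =>
    obtain ⟨m, rfl⟩ : ∃ m, n = m + 1 := ⟨n - 1, by omega⟩
    exact ih (hg.deriv_of_isOpen hU (by norm_cast)) (by omega)

theorem Set.EqOn.deriv_eqOn_zero (hg : EqOn g 0 U) (hU : IsOpen U) :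
    EqOn (_root_.deriv g) 0 U := by
  simpa only [deriv_zero] using hg.deriv hU

end IteratedDerivatives

section V

variable {U : Set ℝ} {f : ℝ → ℝ}

theorem deriv_v (hf : ContDiffOn ℝ 3 f U) (hU : IsOpen U) {y : ℝ} (hy : y ∈ U) :
    deriv (v f) y = deriv f y * deriv^[2] f y - deriv^[3] f y * f y := by
  have hf0 : HasDerivAt f (deriv f y) y :=
    hf.hasDerivAt_iterate_deriv (k := 0) hU (by norm_num) hy
  have hf1 : HasDerivAt (deriv f) (deriv^[2] f y) y :=
    hf.hasDerivAt_iterate_deriv (k := 1) hU (by norm_num) hy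
  have hf2 : HasDerivAt (deriv^[2] f) (deriv^[3] f y) y :=
    hf.hasDerivAt_iterate_deriv (k := 2) hU (by norm_num) hy
  refine (((hf1.fun_pow 2).fun_sub (hf2.fun_mul hf0)).congr_deriv ?_).deriv
  ring

theorem iterate_deriv_two_v (hf : ContDiffOn ℝ 4 f U) (hU : IsOpen U) {x : ℝ} (hx : x ∈ U) :
    deriv^[2] (v f) x = deriv^[2] f x ^ 2 - deriv^[4] f x * f x := by
  have hf0 : HasDerivAt f (deriv f x) x :=
    hf.hasDerivAt_iterate_deriv (k := 0) hU (by norm_num) hx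
  have hf1 : HasDerivAt (deriv f) (deriv^[2] f x) x :=
    hf.hasDerivAt_iterate_deriv (k := 1) hU (by norm_num) hx
  have hf2 : HasDerivAt (deriv^[2] f) (deriv^[3] f x) x :=
    hf.hasDerivAt_iterate_deriv (k := 2) hU (by norm_num) hx
  have hf3 : HasDerivAt (deriv^[3] f) (deriv^[4] f x) x :=
    hf.hasDerivAt_iterate_deriv (k := 3) hU (by norm_num) hx
  have hv : deriv (v f) =ᶠ[𝓝 x] fun y => deriv f y * deriv^[2] f y - deriv^[3] f y * f y :=
    eventually_of_mem (hU.mem_nhds hx) fun y hy => deriv_v (hf.of_le (by norm_num)) hU hy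
  rw [Function.iterate_succ_apply', Function.iterate_one, hv.deriv_eq]
  refine (((hf1.fun_mul hf2).fun_sub (hf3.fun_mul hf0)).congr_deriv ?_).deriv
  ring

end V

section LinearODE

variable {U : Set ℝ} {p q f : ℝ → ℝ}

theorem linearODE_deriv_eqOn_zero (hU : IsOpen U) (hp : ContDiffOn ℝ 1 p U)
    (hq : ContDiffOn ℝ 1 q U) (hf : ContDiffOn ℝ 3 f U)
    (hode : EqOn (fun y => deriv^[2] f y + p y * deriv f y + q y * f y) 0 U) :
    EqOn (fun y => deriv^[3] f y + deriv p y * deriv f y + p y * deriv^[2] f y +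
      deriv q y * f y + q y * deriv f y) 0 U := by
  intro y hy
  have hf0 : HasDerivAt f (deriv f y) y :=
    hf.hasDerivAt_iterate_deriv (k := 0) hU (by norm_num) hy
  have hf1 : HasDerivAt (deriv f) (deriv^[2] f y) y :=
    hf.hasDerivAt_iterate_deriv (k := 1) hU (by norm_num) hy
  have hf2 : HasDerivAt (deriv^[2] f) (deriv^[3] f y) y :=
    hf.hasDerivAt_iterate_deriv (k := 2) hU (by norm_num) hy
  have hp0 : HasDerivAt p (deriv p y) y :=
    hp.hasDerivAt_iterate_deriv (k := 0) hU (by norm_num) hy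
  have hq0 : HasDerivAt q (deriv q y) y :=
    hq.hasDerivAt_iterate_deriv (k := 0) hU (by norm_num) hy
  have hderiv := hode.deriv_eqOn_zero hU hy
  rw [((hf2.fun_add (hp0.fun_mul hf1)).fun_add (hq0.fun_mul hf0)).deriv] at hderiv
  simp only [Pi.zero_apply] at hderiv ⊢
  linear_combination hderiv

theorem linearODE_iterate_deriv_two_eq_zero (hU : IsOpen U) (hp : ContDiffOn ℝ 2 p U)
    (hq : ContDiffOn ℝ 2 q U) (hf : ContDiffOn ℝ 4 f U)
    (hode : EqOn (fun y => deriv^[2] f y + p y * deriv f y + q y * f y) 0 U)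
    {x : ℝ} (hx : x ∈ U) :
    deriv^[4] f x + deriv^[2] p x * deriv f x + 2 * deriv p x * deriv^[2] f x +
      p x * deriv^[3] f x + deriv^[2] q x * f x + 2 * deriv q x * deriv f x +
      q x * deriv^[2] f x = 0 := by
  have hf0 : HasDerivAt f (deriv f x) x :=
    hf.hasDerivAt_iterate_deriv (k := 0) hU (by norm_num) hx
  have hf1 : HasDerivAt (deriv f) (deriv^[2] f x) x :=
    hf.hasDerivAt_iterate_deriv (k := 1) hU (by norm_num) hx
  have hf2 : HasDerivAt (deriv^[2] f) (deriv^[3] f x) x :=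
    hf.hasDerivAt_iterate_deriv (k := 2) hU (by norm_num) hx
  have hf3 : HasDerivAt (deriv^[3] f) (deriv^[4] f x) x :=
    hf.hasDerivAt_iterate_deriv (k := 3) hU (by norm_num) hx
  have hp0 : HasDerivAt p (deriv p x) x :=
    hp.hasDerivAt_iterate_deriv (k := 0) hU (by norm_num) hx
  have hp1 : HasDerivAt (deriv p) (deriv^[2] p x) x :=
    hp.hasDerivAt_iterate_deriv (k := 1) hU (by norm_num) hx
  have hq0 : HasDerivAt q (deriv q x) x :=
    hq.hasDerivAt_iterate_deriv (k := 0) hU (by norm_num) hx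
  have hq1 : HasDerivAt (deriv q) (deriv^[2] q x) x :=
    hq.hasDerivAt_iterate_deriv (k := 1) hU (by norm_num) hx
  have hderiv := (linearODE_deriv_eqOn_zero hU (hp.of_le (by norm_num))
    (hq.of_le (by norm_num)) (hf.of_le (by norm_num)) hode).deriv_eqOn_zero hU hx
  rw [((((hf3.fun_add (hp1.fun_mul hf1)).fun_add (hp0.fun_mul hf2)).fun_add
    (hq1.fun_mul hf0)).fun_add (hq0.fun_mul hf1)).deriv] at hderiv
  simp only [Pi.zero_apply] at hderiv ⊢
  linear_combination hderiv

end LinearODE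

theorem v_equation_of_jets {f₀ f₁ f₂ f₃ f₄ p₀ p₁ p₂ q₀ q₁ q₂ : ℝ} (hp₁ : p₁ ≠ 0)
    (h₀ : f₂ + p₀ * f₁ + q₀ * f₀ = 0)
    (h₁ : f₃ + p₁ * f₁ + p₀ * f₂ + q₁ * f₀ + q₀ * f₁ = 0)
    (h₂ : f₄ + p₂ * f₁ + 2 * p₁ * f₂ + p₀ * f₃ + q₂ * f₀ + 2 * q₁ * f₁ + q₀ * f₂ = 0) :
    (f₂ ^ 2 - f₄ * f₀) + (p₀ - p₂ / p₁) * (f₁ * f₂ - f₃ * f₀) +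
        (2 * p₁ - p₂ * p₀ / p₁) * (f₁ ^ 2 - f₂ * f₀) =
      2 * p₁ * f₁ ^ 2 + f₀ ^ 2 * p₁ * ((q₂ * p₁ - q₁ * p₂) / p₁ ^ 2) + 2 * q₁ * f₁ * f₀ := by
  field_simp
  linear_combination (p₁ * f₂ - p₂ * f₁) * h₀ + p₂ * f₀ * h₁ - p₁ * f₀ * h₂

theorem stmt_7_general (a b : ℝ) (p q f : ℝ → ℝ)
    (hp : ContDiffOn ℝ 2 p (Set.Ioo a b)) (hq : ContDiffOn ℝ 2 q (Set.Ioo a b))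
    (hf : ContDiffOn ℝ 4 f (Set.Ioo a b))
    (hode : ∀ x ∈ Set.Ioo a b, deriv^[2] f x + p x * deriv f x + q x * f x = 0) :
    ∀ x ∈ Set.Ioo a b, deriv p x ≠ 0 →
      deriv^[2] (v f) x + (p x - deriv^[2] p x / deriv p x) * deriv (v f) x +
          (2 * deriv p x - deriv^[2] p x * p x / deriv p x) * v f x =
        2 * deriv p x * (deriv f x) ^ 2 +
          (f x) ^ 2 * deriv p x * deriv (fun y => deriv q y / deriv p y) x +
          2 * deriv q x * deriv f x * f x := by
  intro x hx hp₁
  have hU : IsOpen (Ioo a b) := isOpen_Ioo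
  have hquot : HasDerivAt (fun y => deriv q y / deriv p y)
      ((deriv^[2] q x * deriv p x - deriv q x * deriv^[2] p x) / deriv p x ^ 2) x :=
    (hq.hasDerivAt_iterate_deriv (k := 1) hU (by norm_num) hx).div
      (hp.hasDerivAt_iterate_deriv (k := 1) hU (by norm_num) hx) hp₁
  rw [iterate_deriv_two_v hf hU hx, deriv_v (hf.of_le (by norm_num)) hU hx, v, hquot.deriv]
  exact v_equation_of_jets hp₁ (hode x hx)
    (linearODE_deriv_eqOn_zero hU (hp.of_le (by norm_num)) (hq.of_le (by norm_num))
      (hf.of_le (by norm_num)) hode hx)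
    (linearODE_iterate_deriv_two_eq_zero hU hp hq hf hode hx)

theorem stmt_7 (a b : ℝ) (hab : a < b) (p q f : ℝ → ℝ)
    (hp : ContDiffOn ℝ 2 p (Set.Ioo a b)) (hq : ContDiffOn ℝ 2 q (Set.Ioo a b))
    (hf : ContDiffOn ℝ 4 f (Set.Ioo a b))
    (hode : ∀ x ∈ Set.Ioo a b, deriv^[2] f x + p x * deriv f x + q x * f x = 0) :
    ∀ x ∈ Set.Ioo a b, deriv p x ≠ 0 →
      deriv^[2] (v f) x + (p x - deriv^[2] p x / deriv p x) * deriv (v f) x +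
          (2 * deriv p x - deriv^[2] p x * p x / deriv p x) * v f x =
        2 * deriv p x * (deriv f x) ^ 2 +
          (f x) ^ 2 * deriv p x * deriv (fun y => deriv q y / deriv p y) x +
          2 * deriv q x * deriv f x * f x :=
  stmt_7_general a b p q f hp hq hf hode
end

section
/- Let p, q be continuously differentiable real functions on an open interval (a,b) and let f be a three times differentiable solution of f'' + p·f' + q·f = 0 on (a,b). Then v(f')(x) = p'(x)·f'(x)² + q'(x)·f'(x)·f(x) + q(x)·v(f)(x) for all x in (a,b). In particular, if q ≡ 1 and p' ≥ 0 on (a,b), then v(f')(x) ≥ v(f)(x) for all x in (a,b). -/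
open Filter Topology

theorem v_deriv_eq_of_eventually_ode {p q f : ℝ → ℝ} {x : ℝ}
    (hp : DifferentiableAt ℝ p x) (hq : DifferentiableAt ℝ q x)
    (hf : DifferentiableAt ℝ f x) (hf' : DifferentiableAt ℝ (deriv f) x)
    (hode : ∀ᶠ y in 𝓝 x, deriv^[2] f y + p y * deriv f y + q y * f y = 0) :
    v (deriv f) x =
      deriv p x * deriv f x ^ 2 + deriv q x * deriv f x * f x + q x * v f x := by
  have hf'' : deriv^[2] f =ᶠ[𝓝 x] fun y => -(p y * deriv f y + q y * f y) :=
    hode.mono fun y hy => by linarith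
  have hf''' : deriv^[2] (deriv f) x =
      -(deriv p x * deriv f x + p x * deriv^[2] f x + (deriv q x * f x + q x * deriv f x)) := by
    rw [← Function.iterate_succ_apply, Function.iterate_succ_apply', hf''.deriv_eq,
      deriv.fun_neg, deriv_fun_add (hp.fun_mul hf') (hq.fun_mul hf), deriv_fun_mul hp hf',
      deriv_fun_mul hq hf]
    rfl
  have hf''x : deriv^[2] f x = -(p x * deriv f x + q x * f x) := hf''.eq_of_nhds
  simp only [v, hf''', Function.iterate_succ_apply, Function.iterate_zero_apply] at hf''x ⊢
  rw [hf''x]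
  ring

theorem stmt_9_general (a b : ℝ) (p q f : ℝ → ℝ)
    (hp : ContDiffOn ℝ 1 p (Set.Ioo a b)) (hq : ContDiffOn ℝ 1 q (Set.Ioo a b))
    (hf : ContDiffOn ℝ 3 f (Set.Ioo a b))
    (hode : ∀ x ∈ Set.Ioo a b, deriv^[2] f x + p x * deriv f x + q x * f x = 0) :
    (∀ x ∈ Set.Ioo a b, v (deriv f) x =
        deriv p x * (deriv f x) ^ 2 + deriv q x * deriv f x * f x + q x * v f x) ∧
    ((∀ x ∈ Set.Ioo a b, q x = 1) → (∀ x ∈ Set.Ioo a b, 0 ≤ deriv p x) →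
      ∀ x ∈ Set.Ioo a b, v f x ≤ v (deriv f) x) := by
  have hs : IsOpen (Set.Ioo a b) := isOpen_Ioo
  have hf' : ContDiffOn ℝ 2 (deriv f) (Set.Ioo a b) := hf.deriv_of_isOpen hs (by norm_num)
  have identity : ∀ x ∈ Set.Ioo a b, v (deriv f) x =
      deriv p x * (deriv f x) ^ 2 + deriv q x * deriv f x * f x + q x * v f x := fun x hx =>
    have hx' := hs.mem_nhds hx
    v_deriv_eq_of_eventually_ode
      ((hp.differentiableOn one_ne_zero).differentiableAt hx')
      ((hq.differentiableOn one_ne_zero).differentiableAt hx')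
      ((hf.differentiableOn (by norm_num)).differentiableAt hx')
      ((hf'.differentiableOn (by norm_num)).differentiableAt hx')
      (eventually_of_mem hx' hode)
  refine ⟨identity, fun hq1 hp' x hx => ?_⟩
  have hq' : deriv q x = 0 := by
    rw [(eventuallyEq_of_mem (hs.mem_nhds hx) hq1 : q =ᶠ[𝓝 x] fun _ => 1).deriv_eq, deriv_const]
  have := identity x hx
  rw [hq', hq1 x hx] at this
  nlinarith [sq_nonneg (deriv f x), hp' x hx]

theorem stmt_9 (a b : ℝ) (hab : a < b) (p q f : ℝ → ℝ)
    (hp : ContDiffOn ℝ 1 p (Set.Ioo a b)) (hq : ContDiffOn ℝ 1 q (Set.Ioo a b))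
    (hf : ContDiffOn ℝ 3 f (Set.Ioo a b))
    (hode : ∀ x ∈ Set.Ioo a b, deriv^[2] f x + p x * deriv f x + q x * f x = 0) :
    (∀ x ∈ Set.Ioo a b, v (deriv f) x =
        deriv p x * (deriv f x) ^ 2 + deriv q x * deriv f x * f x + q x * v f x) ∧
    ((∀ x ∈ Set.Ioo a b, q x = 1) → (∀ x ∈ Set.Ioo a b, 0 ≤ deriv p x) →
      ∀ x ∈ Set.Ioo a b, v f x ≤ v (deriv f) x) :=
  stmt_9_general a b p q f hp hq hf hode
end

section
/- Let p, q be twice continuously differentiable real functions on an interval (a,b) and let f be a solution of f'' + p·f' + q·f = 0 on (a,b) (so f is four times differentiable). Then for all x in (a,b), w(f)(x) = (p'(x)·f'(x) + q'(x)·f(x))²·f(x) − A(x)·v(f)(x), where A = (p'' − p'·p + 2q')·f' + (−2p'·q + q'' + p·q')·f, or equivalently A = 2p'·f'' + (p'' + p'·p + 2q')·f' + (q'' + p·q')·f. -/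
/-- Determinant of the 3x3 Hankel-Wronskian matrix of h (rows of 2nd..4th derivatives). -/
noncomputable def w (f : ℝ → ℝ) (x : ℝ) : ℝ :=
  Matrix.det !![deriv^[2] f x, deriv f x, f x;
    deriv^[3] f x, deriv^[2] f x, deriv f x;
    deriv^[4] f x, deriv^[3] f x, deriv^[2] f x]

section

variable {𝕜 : Type*} [NontriviallyNormedField 𝕜]

theorem ContDiffOn.hasDerivAt_deriv {F : Type*} [NormedAddCommGroup F] [NormedSpace 𝕜 F]
    {f : 𝕜 → F} {s : Set 𝕜} {n : WithTop ℕ∞} (hf : ContDiffOn 𝕜 n f s) (hs : IsOpen s)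
    (hn : n ≠ 0) :
    ∀ y ∈ s, HasDerivAt f (deriv f y) y :=
  fun _ hy => (hf.differentiableOn hn).hasDerivAt (hs.mem_nhds hy)

/-- No differentiability of `g''` is assumed: the equation solves for `g''` near each point. -/
theorem secondOrderODE_deriv {s : Set 𝕜} (hs : IsOpen s) {g p q r p' q' r' : 𝕜 → 𝕜}
    (hg : DifferentiableOn 𝕜 g s) (hg' : DifferentiableOn 𝕜 (deriv g) s)
    (hp : ∀ y ∈ s, HasDerivAt p (p' y) y) (hq : ∀ y ∈ s, HasDerivAt q (q' y) y)
    (hr : ∀ y ∈ s, HasDerivAt r (r' y) y)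
    (hode : ∀ y ∈ s, deriv^[2] g y + p y * deriv g y + q y * g y = r y) :
    ∀ y ∈ s, deriv^[2] (deriv g) y + p y * deriv (deriv g) y + (p' y + q y) * deriv g y =
      r' y - q' y * g y := by
  intro y hy
  have hsolved : deriv^[2] g =ᶠ[nhds y] r - p * deriv g - q * g :=
    Filter.eventually_of_mem (hs.mem_nhds hy) fun z hz => by
      simp only [Pi.sub_apply, Pi.mul_apply]
      linear_combination hode z hz
  have hderiv := ((hr y hy).sub ((hp y hy).mul (hg'.hasDerivAt (hs.mem_nhds hy)))).sub
    ((hq y hy).mul (hg.hasDerivAt (hs.mem_nhds hy)))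
  rw [show deriv^[2] (deriv g) y = deriv (deriv^[2] g) y from rfl, hsolved.deriv_eq, hderiv.deriv]
  ring

end

theorem hankel_det_of_secondOrderODE {R : Type*} [CommRing R]
    (f₀ f₁ f₂ f₃ f₄ p p₁ p₂ q q₁ q₂ : R)
    (h₂ : f₂ + p * f₁ + q * f₀ = 0)
    (h₃ : f₃ + p * f₂ + (p₁ + q) * f₁ + q₁ * f₀ = 0)
    (h₄ : f₄ + p * f₃ + (2 * p₁ + q) * f₂ + (p₂ + 2 * q₁) * f₁ + q₂ * f₀ = 0) :
    Matrix.det !![f₂, f₁, f₀; f₃, f₂, f₁; f₄, f₃, f₂] =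
      (p₁ * f₁ + q₁ * f₀) ^ 2 * f₀ -
        ((p₂ - p₁ * p + 2 * q₁) * f₁ + (-2 * p₁ * q + q₂ + p * q₁) * f₀) * (f₁ ^ 2 - f₂ * f₀) := by
  obtain rfl : f₄ = -(p * f₃ + (2 * p₁ + q) * f₂ + (p₂ + 2 * q₁) * f₁ + q₂ * f₀) := by
    linear_combination h₄
  obtain rfl : f₃ = -(p * f₂ + (p₁ + q) * f₁ + q₁ * f₀) := by linear_combination h₃
  obtain rfl : f₂ = -(p * f₁ + q * f₀) := by linear_combination h₂
  simp only [Matrix.det_fin_three, Matrix.of_apply, Matrix.cons_val', Matrix.cons_val_zero,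
    Matrix.cons_val_fin_one, Matrix.cons_val_one, Matrix.cons_val]
  ring

theorem stmt_10_general (a b : ℝ) (p q f : ℝ → ℝ)
    (hp : ContDiffOn ℝ 2 p (Set.Ioo a b)) (hq : ContDiffOn ℝ 2 q (Set.Ioo a b))
    (hf : ContDiffOn ℝ 4 f (Set.Ioo a b))
    (hode : ∀ x ∈ Set.Ioo a b, deriv^[2] f x + p x * deriv f x + q x * f x = 0) :
    ∀ x ∈ Set.Ioo a b,
      (w f x = (deriv p x * deriv f x + deriv q x * f x) ^ 2 * f x -
        ((deriv^[2] p x - deriv p x * p x + 2 * deriv q x) * deriv f x +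
          (-2 * deriv p x * q x + deriv^[2] q x + p x * deriv q x) * f x) * v f x) ∧
      (w f x = (deriv p x * deriv f x + deriv q x * f x) ^ 2 * f x -
        (2 * deriv p x * deriv^[2] f x +
          (deriv^[2] p x + deriv p x * p x + 2 * deriv q x) * deriv f x +
          (deriv^[2] q x + p x * deriv q x) * f x) * v f x) := by
  have hs : IsOpen (Set.Ioo a b) := isOpen_Ioo
  have hf' := hf.deriv_of_isOpen hs (m := 3) (by norm_num)
  have hp₁ := hp.hasDerivAt_deriv hs (by norm_num)
  have hq₁ := hq.hasDerivAt_deriv hs (by norm_num)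
  have hp₂ := (hp.deriv_of_isOpen hs (m := 1) (by norm_num)).hasDerivAt_deriv hs one_ne_zero
  have hq₂ := (hq.deriv_of_isOpen hs (m := 1) (by norm_num)).hasDerivAt_deriv hs one_ne_zero
  have h₃ := secondOrderODE_deriv hs (hf.differentiableOn (by norm_num))
    (hf'.differentiableOn (by norm_num)) hp₁ hq₁ (fun y _ => hasDerivAt_const y (0 : ℝ)) hode
  have h₄ := secondOrderODE_deriv hs (hf'.differentiableOn (by norm_num))
    ((hf'.deriv_of_isOpen hs (m := 2) (by norm_num)).differentiableOn (by norm_num)) hp₁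
    (q := fun y => deriv p y + q y) (fun y hy => (hp₂ y hy).add (hq₁ y hy))
    (fun y hy => (hasDerivAt_const y (0 : ℝ)).sub
      ((hq₂ y hy).mul (hf.hasDerivAt_deriv hs (by norm_num) y hy))) h₃
  intro x hx
  have hw : w f x = _ := hankel_det_of_secondOrderODE (f x) (deriv f x) (deriv^[2] f x)
    (deriv^[3] f x) (deriv^[4] f x) (p x) (deriv p x) (deriv^[2] p x) (q x) (deriv q x)
    (deriv^[2] q x) (hode x hx)
    -- `ring1!` unfolds `deriv^[3] f x` to the `deriv^[2] (deriv f) x` appearing in `h₃`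
    (by linear_combination (norm := ring1!) h₃ x hx)
    (by linear_combination (norm := ring1!) h₄ x hx)
  refine ⟨hw, hw.trans ?_⟩
  rw [v]
  linear_combination (2 * deriv p x * (deriv f x ^ 2 - deriv^[2] f x * f x)) * hode x hx

theorem stmt_10 (a b : ℝ) (hab : a < b) (p q f : ℝ → ℝ)
    (hp : ContDiffOn ℝ 2 p (Set.Ioo a b)) (hq : ContDiffOn ℝ 2 q (Set.Ioo a b))
    (hf : ContDiffOn ℝ 4 f (Set.Ioo a b))
    (hode : ∀ x ∈ Set.Ioo a b, deriv^[2] f x + p x * deriv f x + q x * f x = 0) :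
    ∀ x ∈ Set.Ioo a b,
      (w f x = (deriv p x * deriv f x + deriv q x * f x) ^ 2 * f x -
        ((deriv^[2] p x - deriv p x * p x + 2 * deriv q x) * deriv f x +
          (-2 * deriv p x * q x + deriv^[2] q x + p x * deriv q x) * f x) * v f x) ∧
      (w f x = (deriv p x * deriv f x + deriv q x * f x) ^ 2 * f x -
        (2 * deriv p x * deriv^[2] f x +
          (deriv^[2] p x + deriv p x * p x + 2 * deriv q x) * deriv f x +
          (deriv^[2] q x + p x * deriv q x) * f x) * v f x) :=
  stmt_10_general a b p q f hp hq hf hode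
end

section
/- Let p, q be twice continuously differentiable real functions on an interval (a,b) and let f be a solution of f'' + p·f' + q·f = 0 on (a,b). Then w(f) = a₀·f³ + a₁·f'·f² + a₂·(f')²·f + a₃·(f')³, where a₀ = 2p'q² − pqq' + (q')² − q''q, a₁ = 3p'pq − p''q − 2qq' − p²q' + 2p'q' − pq'', a₂ = (p')² + p²p' − pp'' + 2p'q − 3pq' − q'', and a₃ = pp' − p'' − 2q'. -/
open Set

section IterateDeriv

variable {𝕜 F : Type*} [NontriviallyNormedField 𝕜] [NormedAddCommGroup F] [NormedSpace 𝕜 F]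
  {s : Set 𝕜} {f : 𝕜 → F} {x : 𝕜}

theorem ContDiffOn.hasDerivAt_iterate_deriv_s11 {k : ℕ} (hf : ContDiffOn 𝕜 (k + 1) f s)
    (hs : IsOpen s) (hx : x ∈ s) : HasDerivAt (deriv^[k] f) (deriv^[k + 1] f x) x := by
  induction k generalizing f with
  | zero =>
    simpa using ((hf.differentiableOn (by simp)).differentiableAt (hs.mem_nhds hx)).hasDerivAt
  | succ k ih =>
    rw [Function.iterate_succ, Function.iterate_succ]
    exact ih (hf.deriv_of_isOpen hs (by push_cast; rfl))

theorem iterate_deriv_succ_eq_of_eqOn {k : ℕ} {g : 𝕜 → F} {g' : F} (hs : IsOpen s)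
    (hfg : EqOn (deriv^[k] f) g s) (hx : x ∈ s) (hg : HasDerivAt g g' x) :
    deriv^[k + 1] f x = g' := by
  rw [Function.iterate_succ_apply', (hfg.eventuallyEq_of_mem (hs.mem_nhds hx)).deriv_eq,
    hg.deriv]

end IterateDeriv

section SecondOrderODE

variable {s : Set ℝ} {p q f : ℝ → ℝ} {x : ℝ}

theorem iterate_deriv_three_eq_of_ode (hs : IsOpen s) (hp : ContDiffOn ℝ 1 p s)
    (hq : ContDiffOn ℝ 1 q s) (hf : ContDiffOn ℝ 2 f s)
    (hode : ∀ y ∈ s, deriv^[2] f y + p y * deriv f y + q y * f y = 0) (hx : x ∈ s) :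
    deriv^[3] f x = (p x ^ 2 - deriv p x - q x) * deriv f x + (p x * q x - deriv q x) * f x := by
  have hp' : HasDerivAt p (deriv p x) x := hp.hasDerivAt_iterate_deriv_s11 (k := 0) hs hx
  have hq' : HasDerivAt q (deriv q x) x := hq.hasDerivAt_iterate_deriv_s11 (k := 0) hs hx
  have hf' : HasDerivAt f (deriv f x) x :=
    (hf.of_le (by norm_num)).hasDerivAt_iterate_deriv_s11 (k := 0) hs hx
  have hf'' : HasDerivAt (deriv f) (deriv^[2] f x) x := hf.hasDerivAt_iterate_deriv_s11 (k := 1) hs hx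
  refine iterate_deriv_succ_eq_of_eqOn (k := 2) hs
    (g := fun y => -(p y * deriv f y + q y * f y)) (fun y hy => by linarith [hode y hy]) hx
    (((hp'.mul hf'').add (hq'.mul hf')).neg.congr_deriv ?_)
  linear_combination (-p x) * hode x hx

theorem iterate_deriv_four_eq_of_ode (hs : IsOpen s) (hp : ContDiffOn ℝ 2 p s)
    (hq : ContDiffOn ℝ 2 q s) (hf : ContDiffOn ℝ 2 f s)
    (hode : ∀ y ∈ s, deriv^[2] f y + p y * deriv f y + q y * f y = 0) (hx : x ∈ s) :
    deriv^[4] f x =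
      (3 * p x * deriv p x - deriv^[2] p x - 2 * deriv q x - p x ^ 3 + 2 * p x * q x) *
          deriv f x +
        (2 * deriv p x * q x + p x * deriv q x - deriv^[2] q x - p x ^ 2 * q x + q x ^ 2) *
          f x := by
  have hp₁ : ContDiffOn ℝ 1 p s := hp.of_le (by norm_num)
  have hq₁ : ContDiffOn ℝ 1 q s := hq.of_le (by norm_num)
  have hp' : HasDerivAt p (deriv p x) x := hp₁.hasDerivAt_iterate_deriv_s11 (k := 0) hs hx
  have hq' : HasDerivAt q (deriv q x) x := hq₁.hasDerivAt_iterate_deriv_s11 (k := 0) hs hx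
  have hp'' : HasDerivAt (deriv p) (deriv^[2] p x) x := hp.hasDerivAt_iterate_deriv_s11 (k := 1) hs hx
  have hq'' : HasDerivAt (deriv q) (deriv^[2] q x) x := hq.hasDerivAt_iterate_deriv_s11 (k := 1) hs hx
  have hf' : HasDerivAt f (deriv f x) x :=
    (hf.of_le (by norm_num)).hasDerivAt_iterate_deriv_s11 (k := 0) hs hx
  have hf'' : HasDerivAt (deriv f) (deriv^[2] f x) x := hf.hasDerivAt_iterate_deriv_s11 (k := 1) hs hx
  refine iterate_deriv_succ_eq_of_eqOn (k := 3) hs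
    (fun y hy => iterate_deriv_three_eq_of_ode hs hp₁ hq₁ hf hode hy) hx
    (((((hp'.pow 2).sub hp'').sub hq').mul hf'').add (((hp'.mul hq').sub hq'').mul hf')
      |>.congr_deriv ?_)
  simp only [Pi.mul_apply, Pi.sub_apply, Pi.pow_apply]
  linear_combination (p x ^ 2 - deriv p x - q x) * hode x hx

end SecondOrderODE

theorem stmt_11_general (a b : ℝ) (p q f : ℝ → ℝ)
    (hp : ContDiffOn ℝ 2 p (Set.Ioo a b)) (hq : ContDiffOn ℝ 2 q (Set.Ioo a b))
    (hf : ContDiffOn ℝ 4 f (Set.Ioo a b))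
    (hode : ∀ x ∈ Set.Ioo a b, deriv^[2] f x + p x * deriv f x + q x * f x = 0) :
    ∀ x ∈ Set.Ioo a b,
      w f x =
        (2 * deriv p x * (q x) ^ 2 - p x * q x * deriv q x + (deriv q x) ^ 2 -
            deriv^[2] q x * q x) * (f x) ^ 3 +
        (3 * deriv p x * p x * q x - deriv^[2] p x * q x - 2 * q x * deriv q x -
            (p x) ^ 2 * deriv q x + 2 * deriv p x * deriv q x - p x * deriv^[2] q x) *
          deriv f x * (f x) ^ 2 +
        ((deriv p x) ^ 2 + (p x) ^ 2 * deriv p x - p x * deriv^[2] p x +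
            2 * deriv p x * q x - 3 * p x * deriv q x - deriv^[2] q x) *
          (deriv f x) ^ 2 * f x +
        (p x * deriv p x - deriv^[2] p x - 2 * deriv q x) * (deriv f x) ^ 3 := by
  intro x hx
  have hf₂ : ContDiffOn ℝ 2 f (Ioo a b) := hf.of_le (by norm_num)
  have h2 : deriv^[2] f x = -(p x * deriv f x + q x * f x) := by linarith [hode x hx]
  have h3 := iterate_deriv_three_eq_of_ode isOpen_Ioo (hp.of_le (by norm_num))
    (hq.of_le (by norm_num)) hf₂ hode hx
  have h4 := iterate_deriv_four_eq_of_ode isOpen_Ioo hp hq hf₂ hode hx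
  rw [w, h4, h3, h2, Matrix.det_fin_three]
  simp only [Matrix.of_apply, Matrix.cons_val', Matrix.cons_val_zero, Matrix.cons_val_one,
    Matrix.cons_val, Matrix.cons_val_fin_one]
  ring

theorem stmt_11 (a b : ℝ) (hab : a < b) (p q f : ℝ → ℝ)
    (hp : ContDiffOn ℝ 2 p (Set.Ioo a b)) (hq : ContDiffOn ℝ 2 q (Set.Ioo a b))
    (hf : ContDiffOn ℝ 4 f (Set.Ioo a b))
    (hode : ∀ x ∈ Set.Ioo a b, deriv^[2] f x + p x * deriv f x + q x * f x = 0) :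
    ∀ x ∈ Set.Ioo a b,
      w f x =
        (2 * deriv p x * (q x) ^ 2 - p x * q x * deriv q x + (deriv q x) ^ 2 -
            deriv^[2] q x * q x) * (f x) ^ 3 +
        (3 * deriv p x * p x * q x - deriv^[2] p x * q x - 2 * q x * deriv q x -
            (p x) ^ 2 * deriv q x + 2 * deriv p x * deriv q x - p x * deriv^[2] q x) *
          deriv f x * (f x) ^ 2 +
        ((deriv p x) ^ 2 + (p x) ^ 2 * deriv p x - p x * deriv^[2] p x +
            2 * deriv p x * q x - 3 * p x * deriv q x - deriv^[2] q x) *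
          (deriv f x) ^ 2 * f x +
        (p x * deriv p x - deriv^[2] p x - 2 * deriv q x) * (deriv f x) ^ 3 :=
  stmt_11_general a b p q f hp hq hf hode
end

section
/- Let p be a continuously differentiable real function on an interval (a,b), let q be a real constant, let f be a twice continuously differentiable solution of f'' + p·f' + q·f = 0 on (a,b), and let P be an antiderivative of p. Let a₁, a₂, a₃ be continuously differentiable real functions on (a,b) and define F := a₁·(f')² + a₂·f'·f + a₃·v(f). Then e^{−P(x)}·(d/dx)(e^{P(x)}·F(x)) = A₁·(f')² + A₂·f'·f + A₃·v(f), where A₁ = a₁' − a₁·p + 2a₂, A₂ = a₂' − 2a₁·q + p·a₂ + a₃·p', and A₃ = a₃' − a₂. -/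
/-! On `(a, b)` the equation turns `v f` into `f'² + p f' f + q f²`, a first-order expression, and
then gives the closed derivative formulas `(f'²)' = -2p f'² - 2q f' f`, `(f' f)' = 2f'² - v f` and
`(v f)' = p' f' f - p v f`. Since `e^{-P} (e^P F)' = F' + p F`, the claim is the product rule for
`F = a₁ f'² + a₂ f' f + a₃ v f` combined with these three formulas. -/

open Filter Topology

lemma ContDiffOn.hasDerivAt_deriv_s16 {g : ℝ → ℝ} {s : Set ℝ} {n : WithTop ℕ∞} {x : ℝ}
    (hg : ContDiffOn ℝ n g s) (hn : n ≠ 0) (hs : IsOpen s) (hx : x ∈ s) :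
    HasDerivAt g (deriv g x) x :=
  (((hg x hx).contDiffAt (hs.mem_nhds hx)).differentiableAt hn).hasDerivAt

lemma exp_neg_mul_deriv_exp_mul {P F : ℝ → ℝ} {x p F' : ℝ}
    (hP : HasDerivAt P p x) (hF : HasDerivAt F F' x) :
    Real.exp (-P x) * deriv (fun y => Real.exp (P y) * F y) x = p * F x + F' := by
  have hG : HasDerivAt (fun y => Real.exp (P y) * F y)
      (Real.exp (P x) * p * F x + Real.exp (P x) * F') x :=
    hP.exp.mul hF
  rw [hG.deriv, Real.exp_neg]
  field_simp

lemma v_eq_of_ode {p f : ℝ → ℝ} {q y : ℝ}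
    (hode : deriv^[2] f y + p y * deriv f y + q * f y = 0) :
    v f y = deriv f y ^ 2 + p y * (deriv f y * f y) + q * f y ^ 2 := by
  rw [v, show deriv^[2] f y = -(p y * deriv f y + q * f y) by linarith]
  ring

section ODE

variable {p f : ℝ → ℝ} {q x : ℝ}
  (hf : HasDerivAt f (deriv f x) x) (hf' : HasDerivAt (deriv f) (deriv^[2] f x) x)

include hf' in
lemma hasDerivAt_deriv_sq_of_ode (hode : deriv^[2] f x + p x * deriv f x + q * f x = 0) :
    HasDerivAt (fun y => deriv f y ^ 2)
      (-2 * p x * deriv f x ^ 2 - 2 * q * (deriv f x * f x)) x := by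
  refine (hf'.pow 2).congr_deriv ?_
  linear_combination (2 * deriv f x) * hode

include hf hf' in
lemma hasDerivAt_deriv_mul_of_ode (hode : deriv^[2] f x + p x * deriv f x + q * f x = 0) :
    HasDerivAt (fun y => deriv f y * f y) (2 * deriv f x ^ 2 - v f x) x := by
  refine (hf'.mul hf).congr_deriv ?_
  rw [v_eq_of_ode hode]
  linear_combination f x * hode

include hf hf' in
lemma hasDerivAt_v_of_ode {p' : ℝ} (hp : HasDerivAt p p' x)
    (hode : ∀ᶠ y in 𝓝 x, deriv^[2] f y + p y * deriv f y + q * f y = 0) :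
    HasDerivAt (v f) (p' * (deriv f x * f x) - p x * v f x) x := by
  have hloc : (fun y => deriv f y ^ 2 + p y * (deriv f y * f y) + q * f y ^ 2) =ᶠ[𝓝 x] v f :=
    hode.mono fun y hy => (v_eq_of_ode hy).symm
  refine HasDerivAt.congr_of_eventuallyEq ?_ hloc.symm
  refine (((hf'.pow 2).add (hp.mul (hf'.mul hf))).add ((hf.pow 2).const_mul q)).congr_deriv ?_
  rw [v_eq_of_ode hode.self_of_nhds, Pi.mul_apply]
  linear_combination (2 * deriv f x + p x * f x) * hode.self_of_nhds

end ODE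

theorem stmt_16_general (a b : ℝ) (p f P a₁ a₂ a₃ F : ℝ → ℝ) (q : ℝ)
    (hp : ContDiffOn ℝ 1 p (Set.Ioo a b))
    (hf : ContDiffOn ℝ 2 f (Set.Ioo a b))
    (hode : ∀ x ∈ Set.Ioo a b, deriv^[2] f x + p x * deriv f x + q * f x = 0)
    (hP : ∀ x ∈ Set.Ioo a b, HasDerivAt P (p x) x)
    (ha₁ : ContDiffOn ℝ 1 a₁ (Set.Ioo a b)) (ha₂ : ContDiffOn ℝ 1 a₂ (Set.Ioo a b))
    (ha₃ : ContDiffOn ℝ 1 a₃ (Set.Ioo a b))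
    (hF : F = fun x => a₁ x * (deriv f x) ^ 2 + a₂ x * deriv f x * f x + a₃ x * v f x) :
    ∀ x ∈ Set.Ioo a b,
      Real.exp (-(P x)) * deriv (fun y => Real.exp (P y) * F y) x =
        (deriv a₁ x - a₁ x * p x + 2 * a₂ x) * (deriv f x) ^ 2 +
        (deriv a₂ x - 2 * a₁ x * q + p x * a₂ x + a₃ x * deriv p x) * (deriv f x * f x) +
        (deriv a₃ x - a₂ x) * v f x := by
  intro x hx
  have hs : IsOpen (Set.Ioo a b) := isOpen_Ioo
  have hdf := hf.hasDerivAt_deriv_s16 two_ne_zero hs hx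
  have hdf' : HasDerivAt (deriv f) (deriv^[2] f x) x :=
    (hf.deriv_of_isOpen hs (by norm_num)).hasDerivAt_deriv_s16 one_ne_zero hs hx
  have hode_near : ∀ᶠ y in 𝓝 x, deriv^[2] f y + p y * deriv f y + q * f y = 0 :=
    eventually_of_mem (hs.mem_nhds hx) hode
  have hFd := ((ha₁.hasDerivAt_deriv_s16 one_ne_zero hs hx).mul
      (hasDerivAt_deriv_sq_of_ode hdf' (hode x hx))).add
    (((ha₂.hasDerivAt_deriv_s16 one_ne_zero hs hx).mul
      (hasDerivAt_deriv_mul_of_ode hdf hdf' (hode x hx))).add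
    ((ha₃.hasDerivAt_deriv_s16 one_ne_zero hs hx).mul
      (hasDerivAt_v_of_ode hdf hdf' (hp.hasDerivAt_deriv_s16 one_ne_zero hs hx) hode_near)))
  have hFeq : F = (a₁ * fun y => deriv f y ^ 2) + ((a₂ * fun y => deriv f y * f y) + a₃ * v f) := by
    rw [hF]; ext y; simp only [Pi.add_apply, Pi.mul_apply]; ring
  rw [exp_neg_mul_deriv_exp_mul (hP x hx) (hFeq ▸ hFd), hF]
  ring

theorem stmt_16 (a b : ℝ) (hab : a < b) (p f P a₁ a₂ a₃ F : ℝ → ℝ) (q : ℝ)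
    (hp : ContDiffOn ℝ 1 p (Set.Ioo a b))
    (hf : ContDiffOn ℝ 2 f (Set.Ioo a b))
    (hode : ∀ x ∈ Set.Ioo a b, deriv^[2] f x + p x * deriv f x + q * f x = 0)
    (hP : ∀ x ∈ Set.Ioo a b, HasDerivAt P (p x) x)
    (ha₁ : ContDiffOn ℝ 1 a₁ (Set.Ioo a b)) (ha₂ : ContDiffOn ℝ 1 a₂ (Set.Ioo a b))
    (ha₃ : ContDiffOn ℝ 1 a₃ (Set.Ioo a b))
    (hF : F = fun x => a₁ x * (deriv f x) ^ 2 + a₂ x * deriv f x * f x + a₃ x * v f x) :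
    ∀ x ∈ Set.Ioo a b,
      Real.exp (-(P x)) * deriv (fun y => Real.exp (P y) * F y) x =
        (deriv a₁ x - a₁ x * p x + 2 * a₂ x) * (deriv f x) ^ 2 +
        (deriv a₂ x - 2 * a₁ x * q + p x * a₂ x + a₃ x * deriv p x) * (deriv f x * f x) +
        (deriv a₃ x - a₂ x) * v f x :=
  stmt_16_general a b p f P a₁ a₂ a₃ F q hp hf hode hP ha₁ ha₂ ha₃ hF
end
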